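/- arXiv:1711.08232 — 2 statements merged into one kernel-verified Lean document; each statement's English description precedes it below -/
import Mathlib

section
/- Let n ≥ 1 be an integer, and let s ∈ (0,1) and p ≥ 1 satisfy n > s p. Let Σ ⊆ ℝ^{n+1} be a set with locally finite ℋⁿ-measure, let U be an open subset of Σ (in the subspace topology), and suppose ℋⁿ(Σ ∩ B_ρ(x₀)) ≥ c⋆ ρⁿ for all x₀ ∈ U and all ρ > 0, for some constant c⋆ > 0. Then there exists a constant C depending only on n, s, p, and c⋆, such that ‖v‖_{L^{np/(n−sp)}(Σ, ℋⁿ)} ≤ C [v]_{W^{s,p}(Σ)} for every v ∈ L^p(Σ, ℋⁿ) with [v]_{W^{s,p}(Σ)} < ∞ that vanishes ℋⁿ-a.e. on Σ∖U. -/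
/-!
Write `θ = sp/n` and `q = np/(n - sp)`, so that `q (1 - θ) = p`. Cut a function `w ≥ 0` into
the dyadic shells `Dᵢ = {2ⁱ < w ≤ 2ⁱ⁺¹}`; put `dᵢ = μ Dᵢ` and `aᵢ = μ {w > 2ⁱ} = ∑_{k ≥ 0} dᵢ₊ₖ`.
Let `x ∈ Dᵢ₊₁` satisfy `μ (B_ρ(x)) ≥ c ρⁿ` for all `ρ`. The ball around `x` of radius
`≈ aᵢ^{1/n}` has measure `≥ 2 aᵢ`, so it meets `{w ≤ 2ⁱ}` in measure `≥ aᵢ`, and there `w` is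
smaller than `w x` by at least `2ⁱ`. Hence `∫ |w x - w y|^p |x - y|^{-n-sp} dy ≳ 2^{ip} aᵢ^{-θ}`,
and integrating over the shells, `[w]^p ≳ ∑ᵢ 2^{ip} aᵢ^{-θ} dᵢ₊₁`. On the other hand
`aᵢ ≤ 2^{-iq} ∑ⱼ 2^{jq} aⱼ` and `∑ⱼ 2^{jq} aⱼ ≈ ∑ⱼ 2^{jq} dⱼ ≈ ‖w‖_q^q`, so the right-hand side
is `≳ ‖w‖_q^{q(1-θ)} = ‖w‖_q^p`, provided `‖w‖_q < ∞`. This finiteness holds for the truncations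
`min |v| m` of `v ∈ Lᵖ`, and `m → ∞` gives the inequality for `v`. The density bound on `U`
passes to `closure U` with constant `c⋆ / 2ⁿ`, and almost every point where `v ≠ 0` lies in
`closure U`.
-/

open MeasureTheory Metric Set
open scoped ENNReal NNReal

noncomputable section

/-- The fractional Sobolev seminorm
`[v]_{W^{s,p}(U)} = (∫_U ∫_U |v(x)-v(y)|^p |x-y|^{-(n+sp)} dℋⁿ(x) dℋⁿ(y))^{1/p}`
on an `ℋⁿ`-measurable subset `U` of `ℝ^{n+1}`. -/
def fracSeminorm (n : ℕ) (s p : ℝ) (U : Set (EuclideanSpace ℝ (Fin (n + 1))))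
    (v : EuclideanSpace ℝ (Fin (n + 1)) → ℝ) : ℝ≥0∞ :=
  (∫⁻ x in U, ∫⁻ y in U,
      ENNReal.ofReal (|v x - v y| ^ p * ‖x - y‖ ^ (-((n : ℝ) + s * p)))
        ∂μH[(n : ℝ)] ∂μH[(n : ℝ)]) ^ (1 / p)

lemma ENNReal.two_rpow_add (x y : ℝ) : (2 : ℝ≥0∞) ^ (x + y) = 2 ^ x * 2 ^ y :=
  ENNReal.rpow_add _ _ two_ne_zero ENNReal.ofNat_ne_top

lemma ENNReal.ofReal_two_zpow_rpow (i : ℤ) (q : ℝ) :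
    ENNReal.ofReal ((2 : ℝ) ^ i) ^ q = 2 ^ ((i : ℝ) * q) := by
  rw [← Real.rpow_intCast, ← ENNReal.ofReal_rpow_of_pos two_pos, ENNReal.ofReal_ofNat,
    ← ENNReal.rpow_mul]

section DyadicSums

lemma one_sub_two_rpow_neg_inv_ne_top {q : ℝ} (hq : 0 < q) : (1 - 2 ^ (-q) : ℝ≥0∞)⁻¹ ≠ ⊤ := by
  rw [Ne, ENNReal.inv_eq_top, tsub_eq_zero_iff_le, not_le]
  exact ENNReal.rpow_lt_one_of_one_lt_of_neg ENNReal.one_lt_two (by linarith)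

lemma tsum_two_rpow_mul_tsum_add (q : ℝ) (d : ℤ → ℝ≥0∞) :
    ∑' i : ℤ, 2 ^ ((i : ℝ) * q) * ∑' k : ℕ, d (i + k) =
      (1 - 2 ^ (-q))⁻¹ * ∑' i : ℤ, 2 ^ ((i : ℝ) * q) * d i := by
  have hshift (k : ℕ) : ∑' i : ℤ, 2 ^ ((i : ℝ) * q) * d (i + k) =
      (2 ^ (-q)) ^ k * ∑' i : ℤ, 2 ^ ((i : ℝ) * q) * d i := by
    rw [← ENNReal.tsum_mul_left]
    conv_rhs => rw [← (Equiv.addRight (k : ℤ)).tsum_eq]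
    refine tsum_congr fun i => ?_
    rw [Equiv.coe_addRight, ← mul_assoc, ← ENNReal.rpow_natCast, ← ENNReal.rpow_mul,
      ← ENNReal.two_rpow_add]
    congr 2
    push_cast
    ring
  simp_rw [← ENNReal.tsum_mul_left]
  rw [ENNReal.tsum_comm]
  simp_rw [hshift, ENNReal.tsum_mul_right, ENNReal.tsum_geometric, ENNReal.tsum_mul_left]

lemma le_two_rpow_neg_mul_tsum (q : ℝ) (a : ℤ → ℝ≥0∞) (j : ℤ) :
    a j ≤ 2 ^ (-(j : ℝ) * q) * ∑' i : ℤ, 2 ^ ((i : ℝ) * q) * a i := by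
  calc a j = 2 ^ (-(j : ℝ) * q) * (2 ^ ((j : ℝ) * q) * a j) := by
        rw [← mul_assoc, ← ENNReal.two_rpow_add, neg_mul, neg_add_cancel, ENNReal.rpow_zero,
          one_mul]
    _ ≤ _ := by gcongr; exact ENNReal.le_tsum j

lemma tsum_tail_le (q : ℝ) (d : ℤ → ℝ≥0∞) (j : ℤ) :
    ∑' k : ℕ, d (j + k) ≤
      2 ^ (-(j : ℝ) * q) * ((1 - 2 ^ (-q))⁻¹ * ∑' i : ℤ, 2 ^ ((i : ℝ) * q) * d i) := by
  simpa only [tsum_two_rpow_mul_tsum_add] using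
    le_two_rpow_neg_mul_tsum q (fun i => ∑' k : ℕ, d (i + k)) j

lemma tsum_tail_ne_top {q : ℝ} (hq : 0 < q) {d : ℤ → ℝ≥0∞}
    (hS : ∑' i : ℤ, 2 ^ ((i : ℝ) * q) * d i ≠ ⊤) (j : ℤ) : ∑' k : ℕ, d (j + k) ≠ ⊤ :=
  ne_top_of_le_ne_top (ENNReal.mul_ne_top (by simp)
    (ENNReal.mul_ne_top (one_sub_two_rpow_neg_inv_ne_top hq) hS)) (tsum_tail_le q d j)

lemma rpow_neg_mul_two_rpow_le {p q θ : ℝ} (hθ0 : 0 ≤ θ) (hpq : p + q * θ = q) {A a : ℝ≥0∞}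
    (hA : A ≠ ⊤) (i : ℤ) (ha : a ≤ 2 ^ (-(i : ℝ) * q) * A) :
    A ^ (-θ) * 2 ^ (-q) * 2 ^ (((i + 1 : ℤ) : ℝ) * q) ≤ 2 ^ ((i : ℝ) * p) * a ^ (-θ) := by
  have haθ : 2 ^ ((i : ℝ) * q * θ) * A ^ (-θ) ≤ a ^ (-θ) :=
    calc 2 ^ ((i : ℝ) * q * θ) * A ^ (-θ) = (2 ^ (-(i : ℝ) * q) * A) ^ (-θ) := by
          rw [ENNReal.mul_rpow_of_ne_top (by simp) hA, ← ENNReal.rpow_mul]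
          ring_nf
      _ ≤ a ^ (-θ) := by
          rw [ENNReal.rpow_neg, ENNReal.rpow_neg]
          exact ENNReal.inv_le_inv.2 (ENNReal.rpow_le_rpow ha hθ0)
  calc A ^ (-θ) * 2 ^ (-q) * 2 ^ (((i + 1 : ℤ) : ℝ) * q)
      = A ^ (-θ) * 2 ^ ((i : ℝ) * p + (i : ℝ) * q * θ) := by
        rw [mul_assoc, ← ENNReal.two_rpow_add]
        congr 2
        push_cast
        linear_combination -(i : ℝ) * hpq
    _ = 2 ^ ((i : ℝ) * p) * (2 ^ ((i : ℝ) * q * θ) * A ^ (-θ)) := by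
        rw [ENNReal.two_rpow_add]; ring
    _ ≤ _ := by gcongr

lemma rpow_tsum_two_rpow_mul_le_tsum_tail {p q θ : ℝ} (hq : 0 < q) (hθ0 : 0 ≤ θ) (hθ1 : θ < 1)
    (hpq : p + q * θ = q) (d : ℤ → ℝ≥0∞) (hS : ∑' i : ℤ, 2 ^ ((i : ℝ) * q) * d i ≠ ⊤) :
    (∑' i : ℤ, 2 ^ ((i : ℝ) * q) * d i) ^ (1 - θ) ≤
      2 ^ q * (1 - 2 ^ (-q))⁻¹ ^ θ *
        ∑' i : ℤ, 2 ^ ((i : ℝ) * p) * (∑' k : ℕ, d (i + k)) ^ (-θ) * d (i + 1) := by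
  set S := ∑' i : ℤ, 2 ^ ((i : ℝ) * q) * d i
  set Λ : ℝ≥0∞ := (1 - 2 ^ (-q))⁻¹
  rcases eq_or_ne S 0 with hS0 | hS0
  · rw [hS0, ENNReal.zero_rpow_of_pos (by linarith)]
    exact zero_le
  have hΛ : Λ ≠ ⊤ := one_sub_two_rpow_neg_inv_ne_top hq
  have hΛ0 : Λ ≠ 0 := ENNReal.inv_ne_zero.2 (ENNReal.sub_ne_top ENNReal.one_ne_top)
  have hsum : (Λ * S) ^ (-θ) * 2 ^ (-q) * S ≤
      ∑' i : ℤ, 2 ^ ((i : ℝ) * p) * (∑' k : ℕ, d (i + k)) ^ (-θ) * d (i + 1) := by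
    calc (Λ * S) ^ (-θ) * 2 ^ (-q) * S
        = ∑' i : ℤ, (Λ * S) ^ (-θ) * 2 ^ (-q) * 2 ^ (((i + 1 : ℤ) : ℝ) * q) * d (i + 1) := by
          simp_rw [mul_assoc, ENNReal.tsum_mul_left]
          exact congrArg _ (congrArg _ ((Equiv.addRight (1 : ℤ)).tsum_eq
            (fun j : ℤ => 2 ^ ((j : ℝ) * q) * d j)).symm)
      _ ≤ _ := ENNReal.tsum_le_tsum fun i => by
          gcongr ?_ * _
          exact rpow_neg_mul_two_rpow_le hθ0 hpq (ENNReal.mul_ne_top hΛ hS) i (tsum_tail_le q d i)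
  calc S ^ (1 - θ) = 2 ^ (q + -q) * Λ ^ (θ + -θ) * S ^ (-θ + 1) := by
        rw [add_neg_cancel, add_neg_cancel, ENNReal.rpow_zero, ENNReal.rpow_zero,
          neg_add_eq_sub, one_mul, one_mul]
    _ = 2 ^ q * Λ ^ θ * ((Λ * S) ^ (-θ) * 2 ^ (-q) * S) := by
        rw [ENNReal.mul_rpow_of_ne_top hΛ hS, ENNReal.two_rpow_add, ENNReal.rpow_add _ _ hΛ0 hΛ,
          ENNReal.rpow_add _ _ hS0 hS, ENNReal.rpow_one]
        ring
    _ ≤ _ := by gcongr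

end DyadicSums

section DyadicShells

variable {α : Type*} (w : α → ℝ)

def dyadicShell (i : ℤ) : Set α := w ⁻¹' Ioc ((2 : ℝ) ^ i) (2 ^ (i + 1))

lemma pairwise_disjoint_dyadicShell : Pairwise (Function.onFun Disjoint (dyadicShell w)) := by
  intro i j hij
  have hmono : Monotone fun i : ℤ => (2 : ℝ) ^ i := fun i j h => zpow_le_zpow_right₀ one_le_two h
  simpa [Function.onFun, dyadicShell, Order.succ_eq_add_one] using
    (hmono.pairwise_disjoint_on_Ioc_succ hij).preimage w

lemma preimage_Ioi_two_zpow_eq_iUnion_dyadicShell (i : ℤ) :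
    w ⁻¹' Ioi ((2 : ℝ) ^ i) = ⋃ k : ℕ, dyadicShell w (i + k) := by
  ext x
  simp only [mem_preimage, mem_Ioi, mem_iUnion, dyadicShell, mem_Ioc]
  constructor
  · intro hx
    obtain ⟨j, hj⟩ := exists_mem_Ioc_zpow ((zpow_pos two_pos i).trans hx) one_lt_two
    have hij : i ≤ j := by
      by_contra! h
      have := zpow_le_zpow_right₀ (one_le_two : (1 : ℝ) ≤ 2) (show j + 1 ≤ i by omega)
      linarith [hj.2]
    exact ⟨(j - i).toNat, by rwa [Int.toNat_of_nonneg (by omega), add_sub_cancel]⟩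
  · rintro ⟨k, hk, -⟩
    exact (zpow_le_zpow_right₀ (one_le_two : (1 : ℝ) ≤ 2) (by omega)).trans_lt hk

lemma preimage_Ioi_zero_eq_iUnion_dyadicShell :
    w ⁻¹' Ioi 0 = ⋃ i : ℤ, dyadicShell w i := by
  ext x
  simp only [mem_preimage, mem_Ioi, mem_iUnion, dyadicShell]
  exact ⟨fun hx => exists_mem_Ioc_zpow hx one_lt_two,
    fun ⟨i, hi⟩ => (zpow_pos two_pos i).trans hi.1⟩

variable [MeasurableSpace α] {μ : Measure α} {w}

lemma measurableSet_dyadicShell (hw : Measurable w) (i : ℤ) : MeasurableSet (dyadicShell w i) :=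
  hw measurableSet_Ioc

lemma measure_preimage_Ioi_two_zpow (hw : Measurable w) (i : ℤ) :
    μ (w ⁻¹' Ioi ((2 : ℝ) ^ i)) = ∑' k : ℕ, μ (dyadicShell w (i + k)) := by
  rw [preimage_Ioi_two_zpow_eq_iUnion_dyadicShell]
  refine measure_iUnion ?_ fun k => measurableSet_dyadicShell hw _
  exact (pairwise_disjoint_dyadicShell w).comp_of_injective fun k l h => by simpa using h

lemma lintegral_rpow_eq_tsum_dyadicShell (hw : Measurable w) {q : ℝ} (hq : 0 < q) :
    ∫⁻ x, ENNReal.ofReal (w x) ^ q ∂μ =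
      ∑' i : ℤ, ∫⁻ x in dyadicShell w i, ENNReal.ofReal (w x) ^ q ∂μ := by
  rw [← lintegral_iUnion (measurableSet_dyadicShell hw) (pairwise_disjoint_dyadicShell w),
    ← preimage_Ioi_zero_eq_iUnion_dyadicShell, ← lintegral_indicator (hw measurableSet_Ioi)]
  refine lintegral_congr fun x => ?_
  by_cases hx : 0 < w x
  · rw [indicator_of_mem (show x ∈ w ⁻¹' Ioi 0 from hx)]
  · rw [indicator_of_notMem (show x ∉ w ⁻¹' Ioi 0 from hx),
      ENNReal.ofReal_eq_zero.2 (not_lt.1 hx), ENNReal.zero_rpow_of_pos hq]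

lemma tsum_le_lintegral_rpow (hw : Measurable w) {q : ℝ} (hq : 0 < q) :
    ∑' i : ℤ, 2 ^ ((i : ℝ) * q) * μ (dyadicShell w i) ≤ ∫⁻ x, ENNReal.ofReal (w x) ^ q ∂μ := by
  rw [lintegral_rpow_eq_tsum_dyadicShell hw hq]
  refine ENNReal.tsum_le_tsum fun i => ?_
  rw [← setLIntegral_const, ← ENNReal.ofReal_two_zpow_rpow]
  refine setLIntegral_mono (by fun_prop) fun x hx => ?_
  exact ENNReal.rpow_le_rpow (ENNReal.ofReal_le_ofReal hx.1.le) hq.le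

lemma lintegral_rpow_le_tsum (hw : Measurable w) {q : ℝ} (hq : 0 < q) :
    ∫⁻ x, ENNReal.ofReal (w x) ^ q ∂μ ≤
      2 ^ q * ∑' i : ℤ, 2 ^ ((i : ℝ) * q) * μ (dyadicShell w i) := by
  rw [lintegral_rpow_eq_tsum_dyadicShell hw hq, ← ENNReal.tsum_mul_left]
  refine ENNReal.tsum_le_tsum fun i => ?_
  rw [← mul_assoc, ← ENNReal.two_rpow_add, ← setLIntegral_const,
    show q + (i : ℝ) * q = ((i + 1 : ℤ) : ℝ) * q by push_cast; ring,
    ← ENNReal.ofReal_two_zpow_rpow]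
  refine setLIntegral_mono measurable_const fun x hx => ?_
  exact ENNReal.rpow_le_rpow (ENNReal.ofReal_le_ofReal hx.2) hq.le

end DyadicShells

section Truncation

variable {α : Type*} [MeasurableSpace α] {μ : Measure α}

lemma abs_min_sub_min_le (a b c : ℝ) : |min a c - min b c| ≤ |a - b| := by
  simpa using abs_min_sub_min_le_max a c b c

lemma lintegral_min_rpow_le {p q : ℝ} (hp : 0 ≤ p) (hpq : p ≤ q) (f : α → ℝ) (L : ℝ) :
    ∫⁻ x, ENNReal.ofReal (min |f x| L) ^ q ∂μ ≤
      ENNReal.ofReal L ^ (q - p) * ∫⁻ x, ENNReal.ofReal |f x| ^ p ∂μ := by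
  rw [← lintegral_const_mul' _ _
    (ENNReal.rpow_ne_top_of_nonneg (by linarith) ENNReal.ofReal_ne_top)]
  refine lintegral_mono fun x => ?_
  rw [show q = (q - p) + p by ring, ENNReal.rpow_add_of_nonneg _ _ (by linarith) hp,
    add_sub_cancel_right]
  gcongr
  exacts [min_le_right _ _, min_le_left _ _]

lemma lintegral_rpow_eq_iSup_min {q : ℝ} (hq : 0 ≤ q) {f : α → ℝ} (hf : Measurable f) :
    ∫⁻ x, ENNReal.ofReal |f x| ^ q ∂μ = ⨆ m : ℕ, ∫⁻ x, ENNReal.ofReal (min |f x| m) ^ q ∂μ := by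
  rw [← lintegral_iSup (fun m => by fun_prop) fun m m' h x => by dsimp only; gcongr]
  congr with x
  obtain ⟨m, hm⟩ := exists_nat_ge |f x|
  refine le_antisymm (le_iSup_of_le m (by rw [min_eq_left hm])) (iSup_le fun m => ?_)
  gcongr
  exact min_le_left _ _

end Truncation

lemma measure_le_measure_diff_of_two_mul_le {α : Type*} [MeasurableSpace α] {μ : Measure α}
    {s B : Set α} (hB : μ B ≠ ⊤) (h : 2 * μ B ≤ μ s) : μ B ≤ μ (s \ B) :=
  calc μ B = 2 * μ B - μ B := by rw [two_mul, ENNReal.add_sub_cancel_right hB]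
    _ ≤ μ s - μ B := tsub_le_tsub_right h _
    _ ≤ μ (s \ B) := le_measure_sdiff

def fracSobolevExponent (n : ℕ) (s p : ℝ) : ℝ := n * p / (n - s * p)

section Exponents

variable {n : ℕ} {s p : ℝ}

lemma fracSobolevExponent_pos (hs : 0 < s) (hp : 0 < p) (hsp : s * p < n) :
    0 < fracSobolevExponent n s p :=
  div_pos (mul_pos (by linarith [mul_pos hs hp]) hp) (by linarith)

lemma le_fracSobolevExponent (hs : 0 < s) (hp : 0 < p) (hsp : s * p < n) :
    p ≤ fracSobolevExponent n s p := by
  rw [fracSobolevExponent, le_div_iff₀ (by linarith)]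
  nlinarith [mul_pos hs hp]

lemma fracSobolevExponent_mul_one_sub (hs : 0 < s) (hp : 0 < p) (hsp : s * p < n) :
    fracSobolevExponent n s p * (1 - s * p / n) = p := by
  have hn : (0 : ℝ) < n := (mul_pos hs hp).trans hsp
  rw [fracSobolevExponent, one_sub_div hn.ne', div_mul_div_comm,
    div_eq_iff (mul_ne_zero (sub_pos.2 hsp).ne' hn.ne')]
  ring

end Exponents

def fracSobolevConst (n : ℕ) (s p c : ℝ) : ℝ≥0∞ :=
  2 * (2 ^ fracSobolevExponent n s p * (1 - 2 ^ (-fracSobolevExponent n s p))⁻¹ ^ (s * p / n) *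
    ENNReal.ofReal ((2 / c) ^ (1 + s * p / n))) ^ (1 / p)

section Constant

variable {n : ℕ} {s p c : ℝ}

lemma fracSobolevConst_ne_top (hs : 0 < s) (hp : 0 < p) (hsp : s * p < n) :
    fracSobolevConst n s p c ≠ ⊤ := by
  refine ENNReal.mul_ne_top (by simp) (ENNReal.rpow_ne_top_of_nonneg (by positivity) ?_)
  refine ENNReal.mul_ne_top (ENNReal.mul_ne_top (by simp) ?_) ENNReal.ofReal_ne_top
  exact ENNReal.rpow_ne_top_of_nonneg (by positivity)
    (one_sub_two_rpow_neg_inv_ne_top (fracSobolevExponent_pos hs hp hsp))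

lemma fracSobolevConst_ne_zero (hs : 0 ≤ s) (hp : 0 ≤ p) (hc : 0 < c) :
    fracSobolevConst n s p c ≠ 0 := by
  have hθ : 0 ≤ s * p / n := by positivity
  refine mul_ne_zero two_ne_zero
    (ENNReal.rpow_pos_of_nonneg (pos_iff_ne_zero.2 ?_) (by positivity)).ne'
  refine mul_ne_zero (mul_ne_zero (ENNReal.rpow_pos two_pos ENNReal.ofNat_ne_top).ne'
    (ENNReal.rpow_pos_of_nonneg ?_ hθ).ne') ?_
  · exact ENNReal.inv_pos.2 (ENNReal.sub_ne_top ENNReal.one_ne_top)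
  · exact (ENNReal.ofReal_pos.2 (Real.rpow_pos_of_pos (div_pos two_pos hc) _)).ne'

end Constant

section Gagliardo

variable {E : Type*} [NormedAddCommGroup E] {n : ℕ} {s p c : ℝ}

def gagliardoKernel (n : ℕ) (s p : ℝ) (v : E → ℝ) (x y : E) : ℝ≥0∞ :=
  ENNReal.ofReal (|v x - v y| ^ p * ‖x - y‖ ^ (-((n : ℝ) + s * p)))


lemma two_zpow_rpow_mul_le_gagliardoKernel (hp : 0 ≤ p) {w : E → ℝ} {x y : E} {i : ℤ}
    (h : 2 ^ i ≤ w x - w y) :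
    2 ^ ((i : ℝ) * p) * ENNReal.ofReal (‖x - y‖ ^ (-((n : ℝ) + s * p))) ≤
      gagliardoKernel n s p w x y := by
  rw [← ENNReal.ofReal_two_zpow_rpow, ENNReal.ofReal_rpow_of_pos (zpow_pos two_pos _),
    ← ENNReal.ofReal_mul (by positivity)]
  refine ENNReal.ofReal_le_ofReal (mul_le_mul_of_nonneg_right ?_ (by positivity))
  exact Real.rpow_le_rpow (by positivity) (h.trans (le_abs_self _)) hp

variable [MeasurableSpace E] {μ : Measure E}

variable (μ) in
def gagliardoEnergy (n : ℕ) (s p : ℝ) (v : E → ℝ) : ℝ≥0∞ :=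
  ∫⁻ x, ∫⁻ y, gagliardoKernel n s p v x y ∂μ ∂μ

lemma gagliardoEnergy_mono (hp : 0 ≤ p) {w v : E → ℝ}
    (h : ∀ x y, |w x - w y| ≤ |v x - v y|) :
    gagliardoEnergy μ n s p w ≤ gagliardoEnergy μ n s p v :=
  lintegral_mono fun x => lintegral_mono fun y => ENNReal.ofReal_le_ofReal <|
    mul_le_mul_of_nonneg_right (Real.rpow_le_rpow (abs_nonneg _) (h x y) hp) (by positivity)

lemma gagliardoEnergy_congr_ae {v w : E → ℝ} (h : v =ᵐ[μ] w) :
    gagliardoEnergy μ n s p v = gagliardoEnergy μ n s p w := by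
  refine lintegral_congr_ae ?_
  filter_upwards [h] with x hx
  refine lintegral_congr_ae ?_
  filter_upwards [h] with y hy
  rw [gagliardoKernel, gagliardoKernel, hx, hy]

variable [OpensMeasurableSpace E]

lemma ofReal_mul_rpow_le_setLIntegral_compl [NullSingletonClass μ] (hn : 0 < n)
    {β : ℝ} (hβ : 0 ≤ β) (hc : 0 < c) {x : E}
    (hx : ∀ ρ, 0 < ρ → ENNReal.ofReal (c * ρ ^ n) ≤ μ (ball x ρ)) {B : Set E}
    (hB : MeasurableSet B) (hB0 : μ B ≠ 0) (hBt : μ B ≠ ⊤) :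
    ENNReal.ofReal ((c / 2) ^ (β / n)) * μ B ^ (1 - β / n) ≤
      ∫⁻ y in Bᶜ, ENNReal.ofReal (‖x - y‖ ^ (-β)) ∂μ := by
  set t := (μ B).toReal
  have ht : 0 < t := ENNReal.toReal_pos hB0 hBt
  -- the radius at which the density bound gives `μ (ball x r) ≥ 2 μ B`
  set r := (2 * t / c) ^ (n : ℝ)⁻¹
  have hr : 0 < r := by positivity
  have hrn : c * r ^ n = 2 * t := by
    rw [← Real.rpow_natCast, ← Real.rpow_mul (by positivity), inv_mul_cancel₀ (by positivity),
      Real.rpow_one]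
    field_simp
  have hball : μ B ≤ μ (ball x r \ B) := by
    refine measure_le_measure_diff_of_two_mul_le hBt ?_
    rw [← ENNReal.ofReal_toReal hBt, ← ENNReal.ofReal_ofNat 2, ← ENNReal.ofReal_mul two_pos.le,
      ← hrn]
    exact hx r hr
  have hker : ∀ᵐ y ∂μ.restrict (ball x r \ B),
      ENNReal.ofReal (r ^ (-β)) ≤ ENNReal.ofReal (‖x - y‖ ^ (-β)) := by
    -- `‖x - x‖ ^ (-β) = 0` (junk value of `Real.rpow`), so the centre itself has to be discarded
    filter_upwards [ae_restrict_mem (measurableSet_ball.diff hB),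
      ae_restrict_of_ae (Measure.ae_ne μ x)] with y hy hyx
    have hxy : ‖x - y‖ < r := by rw [← dist_eq_norm, dist_comm]; exact hy.1
    exact ENNReal.ofReal_le_ofReal (Real.rpow_le_rpow_of_nonpos
      (norm_pos_iff.2 (sub_ne_zero.2 hyx.symm)) hxy.le (neg_nonpos.2 hβ))
  have hrβ : r ^ (-β) = (c / 2) ^ (β / n) * t ^ (-(β / n)) := by
    rw [← Real.rpow_mul (by positivity), show 2 * t / c = (c / 2)⁻¹ * t by field_simp,
      Real.mul_rpow (by positivity) ht.le, Real.inv_rpow (by positivity),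
      ← Real.rpow_neg (by positivity)]
    ring_nf
  calc ENNReal.ofReal ((c / 2) ^ (β / n)) * μ B ^ (1 - β / n)
      = ENNReal.ofReal (r ^ (-β)) * μ B := by
        rw [hrβ, ENNReal.ofReal_mul (by positivity), ← ENNReal.ofReal_rpow_of_pos ht,
          ENNReal.ofReal_toReal hBt, mul_assoc, sub_eq_neg_add,
          ENNReal.rpow_add _ _ hB0 hBt, ENNReal.rpow_one]
    _ ≤ ENNReal.ofReal (r ^ (-β)) * μ (ball x r \ B) := by gcongr
    _ = ∫⁻ _ in ball x r \ B, ENNReal.ofReal (r ^ (-β)) ∂μ := (setLIntegral_const _ _).symm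
    _ ≤ ∫⁻ y in ball x r \ B, ENNReal.ofReal (‖x - y‖ ^ (-β)) ∂μ := lintegral_mono_ae hker
    _ ≤ ∫⁻ y in Bᶜ, ENNReal.ofReal (‖x - y‖ ^ (-β)) ∂μ := lintegral_mono_set fun y hy => hy.2

lemma mul_rpow_le_lintegral_gagliardoKernel [NullSingletonClass μ] (hn : 0 < n) (hs : 0 ≤ s)
    (hp : 0 ≤ p) (hc : 0 < c) {w : E → ℝ} (hw : Measurable w) {x : E}
    (hx : ∀ ρ, 0 < ρ → ENNReal.ofReal (c * ρ ^ n) ≤ μ (ball x ρ)) {i : ℤ}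
    (hwx : 2 ^ (i + 1) < w x) (hB0 : μ (w ⁻¹' Ioi (2 ^ i)) ≠ 0)
    (hBt : μ (w ⁻¹' Ioi (2 ^ i)) ≠ ⊤) :
    ENNReal.ofReal ((c / 2) ^ (1 + s * p / n)) *
        (2 ^ ((i : ℝ) * p) * μ (w ⁻¹' Ioi (2 ^ i)) ^ (-(s * p / n))) ≤
      ∫⁻ y, gagliardoKernel n s p w x y ∂μ := by
  set B := w ⁻¹' Ioi ((2 : ℝ) ^ i)
  have hgeo := ofReal_mul_rpow_le_setLIntegral_compl hn (β := n + s * p) (by positivity) hc hx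
    (hw measurableSet_Ioi) hB0 hBt
  rw [show ((n : ℝ) + s * p) / n = 1 + s * p / n by field_simp, sub_add_cancel_left] at hgeo
  have hjump : ∀ y ∈ Bᶜ, 2 ^ ((i : ℝ) * p) * ENNReal.ofReal (‖x - y‖ ^ (-((n : ℝ) + s * p))) ≤
      gagliardoKernel n s p w x y := by
    intro y hy
    have hwy : w y ≤ 2 ^ i := not_lt.1 hy
    rw [zpow_add_one₀ two_ne_zero] at hwx
    exact two_zpow_rpow_mul_le_gagliardoKernel hp (by linarith)
  calc ENNReal.ofReal ((c / 2) ^ (1 + s * p / n)) * (2 ^ ((i : ℝ) * p) * μ B ^ (-(s * p / n)))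
      = 2 ^ ((i : ℝ) * p) * (ENNReal.ofReal ((c / 2) ^ (1 + s * p / n)) *
          μ B ^ (-(s * p / n))) := by ring
    _ ≤ 2 ^ ((i : ℝ) * p) *
          ∫⁻ y in Bᶜ, ENNReal.ofReal (‖x - y‖ ^ (-((n : ℝ) + s * p))) ∂μ := by gcongr
    _ = ∫⁻ y in Bᶜ, 2 ^ ((i : ℝ) * p) *
          ENNReal.ofReal (‖x - y‖ ^ (-((n : ℝ) + s * p))) ∂μ :=
        (lintegral_const_mul' _ _ (by simp)).symm
    _ ≤ ∫⁻ y in Bᶜ, gagliardoKernel n s p w x y ∂μ :=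
        setLIntegral_mono' (hw measurableSet_Ioi).compl hjump
    _ ≤ _ := setLIntegral_le_lintegral _ _

lemma mul_measure_dyadicShell_le_setLIntegral [NullSingletonClass μ] (hn : 0 < n) (hs : 0 ≤ s)
    (hp : 0 ≤ p) (hc : 0 < c) {w : E → ℝ} (hw : Measurable w)
    (hden : ∀ᵐ x ∂μ, 0 < w x → ∀ ρ, 0 < ρ → ENNReal.ofReal (c * ρ ^ n) ≤ μ (ball x ρ))
    (i : ℤ) (hBt : μ (w ⁻¹' Ioi (2 ^ i)) ≠ ⊤) :
    ENNReal.ofReal ((c / 2) ^ (1 + s * p / n)) * (2 ^ ((i : ℝ) * p) *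
        μ (w ⁻¹' Ioi (2 ^ i)) ^ (-(s * p / n)) * μ (dyadicShell w (i + 1))) ≤
      ∫⁻ x in dyadicShell w (i + 1), ∫⁻ y, gagliardoKernel n s p w x y ∂μ ∂μ := by
  set B := w ⁻¹' Ioi ((2 : ℝ) ^ i)
  set D := dyadicShell w (i + 1)
  have hDB : D ⊆ B := fun x hx => (zpow_lt_zpow_right₀ one_lt_two (lt_add_one i)).trans hx.1
  rcases eq_or_ne (μ B) 0 with hB0 | hB0
  · rw [measure_mono_null hDB hB0, mul_zero, mul_zero]
    exact zero_le
  calc ENNReal.ofReal ((c / 2) ^ (1 + s * p / n)) *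
        (2 ^ ((i : ℝ) * p) * μ B ^ (-(s * p / n)) * μ D)
      = ∫⁻ _ in D, ENNReal.ofReal ((c / 2) ^ (1 + s * p / n)) *
          (2 ^ ((i : ℝ) * p) * μ B ^ (-(s * p / n))) ∂μ := by
        rw [setLIntegral_const]; ring
    _ ≤ _ := by
        refine lintegral_mono_ae ?_
        filter_upwards [ae_restrict_mem (measurableSet_dyadicShell hw _), ae_restrict_of_ae hden]
          with x hxD hx
        exact mul_rpow_le_lintegral_gagliardoKernel hn hs hp hc hw
          (hx ((zpow_pos two_pos _).trans hxD.1)) hxD.1 hB0 hBt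

lemma mul_tsum_le_gagliardoEnergy [NullSingletonClass μ] (hn : 0 < n) (hs : 0 ≤ s)
    (hp : 0 ≤ p) (hc : 0 < c) {w : E → ℝ} (hw : Measurable w)
    (hden : ∀ᵐ x ∂μ, 0 < w x → ∀ ρ, 0 < ρ → ENNReal.ofReal (c * ρ ^ n) ≤ μ (ball x ρ))
    (hBt : ∀ i : ℤ, μ (w ⁻¹' Ioi (2 ^ i)) ≠ ⊤) :
    ENNReal.ofReal ((c / 2) ^ (1 + s * p / n)) * ∑' i : ℤ, 2 ^ ((i : ℝ) * p) *
        μ (w ⁻¹' Ioi (2 ^ i)) ^ (-(s * p / n)) * μ (dyadicShell w (i + 1)) ≤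
      gagliardoEnergy μ n s p w :=
  calc _ ≤ ∑' i : ℤ, ∫⁻ x in dyadicShell w (i + 1), ∫⁻ y, gagliardoKernel n s p w x y ∂μ ∂μ := by
        rw [← ENNReal.tsum_mul_left]
        exact ENNReal.tsum_le_tsum fun i =>
          mul_measure_dyadicShell_le_setLIntegral hn hs hp hc hw hden i (hBt i)
    _ = ∫⁻ x in ⋃ i : ℤ, dyadicShell w (i + 1), ∫⁻ y, gagliardoKernel n s p w x y ∂μ ∂μ :=
        (lintegral_iUnion (fun i => measurableSet_dyadicShell hw _)
          ((pairwise_disjoint_dyadicShell w).comp_of_injective (add_left_injective 1)) _).symm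
    _ ≤ _ := setLIntegral_le_lintegral _ _

end Gagliardo

section Sobolev

variable {E : Type*} [NormedAddCommGroup E] [MeasurableSpace E] [OpensMeasurableSpace E]
  {μ : Measure E} [NullSingletonClass μ] {n : ℕ} {s p c : ℝ}

theorem lintegral_rpow_le_fracSobolevConst_mul (hs : 0 < s) (hp : 0 < p) (hsp : s * p < n)
    (hc : 0 < c) {w : E → ℝ} (hw : Measurable w)
    (hwq : ∫⁻ x, ENNReal.ofReal (w x) ^ fracSobolevExponent n s p ∂μ ≠ ⊤)
    (hden : ∀ᵐ x ∂μ, 0 < w x → ∀ ρ, 0 < ρ → ENNReal.ofReal (c * ρ ^ n) ≤ μ (ball x ρ)) :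
    (∫⁻ x, ENNReal.ofReal (w x) ^ fracSobolevExponent n s p ∂μ) ^ (1 / fracSobolevExponent n s p)
      ≤ fracSobolevConst n s p c * gagliardoEnergy μ n s p w ^ (1 / p) := by
  have hn : 0 < n := by exact_mod_cast (mul_pos hs hp).trans hsp
  have hq := fracSobolevExponent_pos hs hp hsp
  have hqθ := fracSobolevExponent_mul_one_sub hs hp hsp
  set q := fracSobolevExponent n s p
  set θ := s * p / n
  have hθ1 : θ < 1 := (div_lt_one (by positivity)).2 hsp
  set d : ℤ → ℝ≥0∞ := fun i => μ (dyadicShell w i)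
  set S := ∑' i : ℤ, 2 ^ ((i : ℝ) * q) * d i
  set c₀ := ENNReal.ofReal ((c / 2) ^ (1 + θ))
  set T := gagliardoEnergy μ n s p w
  have hS : S ≠ ⊤ := ne_top_of_le_ne_top hwq (tsum_le_lintegral_rpow hw hq)
  have hB (i : ℤ) : μ (w ⁻¹' Ioi (2 ^ i)) = ∑' k : ℕ, d (i + k) :=
    measure_preimage_Ioi_two_zpow hw i
  have henergy := mul_tsum_le_gagliardoEnergy hn hs.le hp.le hc hw hden
    fun i => hB i ▸ tsum_tail_ne_top hq hS i
  simp only [hB] at henergy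
  have hc₀ : c₀ ≠ 0 := by simp only [c₀, ne_eq, ENNReal.ofReal_eq_zero, not_le]; positivity
  have hc₀inv : c₀⁻¹ = ENNReal.ofReal ((2 / c) ^ (1 + θ)) := by
    rw [← ENNReal.ofReal_inv_of_pos (by positivity), ← Real.inv_rpow (by positivity), inv_div]
  have hSθ : S ^ (1 - θ) ≤ 2 ^ q * (1 - 2 ^ (-q))⁻¹ ^ θ * (c₀⁻¹ * T) :=
    (rpow_tsum_two_rpow_mul_le_tsum_tail (p := p) hq (by positivity) hθ1
      (by linear_combination -hqθ) d hS).trans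
      (by gcongr; rwa [← ENNReal.mul_le_iff_le_inv hc₀ ENNReal.ofReal_ne_top])
  calc (∫⁻ x, ENNReal.ofReal (w x) ^ q ∂μ) ^ (1 / q)
      ≤ (2 ^ q * S) ^ (1 / q) := by gcongr; exact lintegral_rpow_le_tsum hw hq
    _ = 2 * (S ^ (1 - θ)) ^ (1 / p) := by
        rw [ENNReal.mul_rpow_of_nonneg _ _ (by positivity), ← ENNReal.rpow_mul,
          ← ENNReal.rpow_mul, mul_one_div_cancel hq.ne', ENNReal.rpow_one, ← hqθ]
        congr 2
        field_simp [(sub_pos.2 hθ1).ne']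
    _ ≤ 2 * (2 ^ q * (1 - 2 ^ (-q))⁻¹ ^ θ * (c₀⁻¹ * T)) ^ (1 / p) := by gcongr
    _ = fracSobolevConst n s p c * T ^ (1 / p) := by
        rw [fracSobolevConst, hc₀inv, ← mul_assoc,
          ENNReal.mul_rpow_of_nonneg _ T (by positivity : (0 : ℝ) ≤ 1 / p)]
        ring

theorem eLpNorm_le_fracSobolevConst_mul (hs : 0 < s) (hp : 0 < p) (hsp : s * p < n)
    (hc : 0 < c) {v : E → ℝ} (hv : MemLp v (ENNReal.ofReal p) μ)
    (hden : ∀ᵐ x ∂μ, v x ≠ 0 → ∀ ρ, 0 < ρ → ENNReal.ofReal (c * ρ ^ n) ≤ μ (ball x ρ)) :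
    eLpNorm v (ENNReal.ofReal (fracSobolevExponent n s p)) μ ≤
      fracSobolevConst n s p c * gagliardoEnergy μ n s p v ^ (1 / p) := by
  have hq := fracSobolevExponent_pos hs hp hsp
  have hpq := le_fracSobolevExponent hs hp hsp
  set q := fracSobolevExponent n s p
  set g := hv.1.mk v
  have hg : Measurable g := hv.1.stronglyMeasurable_mk.measurable
  have hvg : v =ᵐ[μ] g := hv.1.ae_eq_mk
  have hgp : ∫⁻ x, ENNReal.ofReal |g x| ^ p ∂μ ≠ ⊤ := by
    have h := lintegral_rpow_enorm_lt_top_of_eLpNorm_lt_top (by simpa using hp)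
      ENNReal.ofReal_ne_top (hv.ae_eq hvg).eLpNorm_lt_top
    simpa [Real.enorm_eq_ofReal_abs, ENNReal.toReal_ofReal hp.le] using h.ne
  rw [eLpNorm_congr_ae hvg, gagliardoEnergy_congr_ae hvg,
    eLpNorm_eq_lintegral_rpow_enorm_toReal (by simpa using hq) ENNReal.ofReal_ne_top,
    ENNReal.toReal_ofReal hq.le]
  simp only [Real.enorm_eq_ofReal_abs]
  rw [lintegral_rpow_eq_iSup_min hq.le hg, one_div, ENNReal.rpow_inv_le_iff hq]
  refine iSup_le fun m => (ENNReal.rpow_inv_le_iff hq).1 ?_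
  rw [← one_div]
  refine (lintegral_rpow_le_fracSobolevConst_mul hs hp hsp hc (by fun_prop) ?_ ?_).trans ?_
  · exact ne_top_of_le_ne_top (ENNReal.mul_ne_top (ENNReal.rpow_ne_top_of_nonneg (by linarith)
      ENNReal.ofReal_ne_top) hgp) (lintegral_min_rpow_le hp.le hpq g m)
  · filter_upwards [hden, hvg] with x hx hvgx hw
    exact hx (hvgx ▸ abs_pos.1 (hw.trans_le (min_le_left _ _)))
  · gcongr
    exact gagliardoEnergy_mono hp.le fun x y =>
      (abs_min_sub_min_le _ _ _).trans (abs_abs_sub_abs_le_abs_sub _ _)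

end Sobolev

section Support

variable {X : Type*} [MeasurableSpace X] {μ : Measure X} {S U : Set X}

lemma ae_restrict_mem_closure_of_ae_eq_zero [TopologicalSpace X] [OpensMeasurableSpace X]
    {M : Type*} [Zero M] {v : X → M} (hv : ∀ᵐ x ∂μ.restrict (S \ U), v x = 0) :
    ∀ᵐ x ∂μ.restrict S, v x ≠ 0 → x ∈ closure U := by
  have hle : μ.restrict S ≤ μ.restrict (S \ U) + μ.restrict U :=
    (Measure.restrict_mono_set μ (subset_sdiff_union S U)).trans (Measure.restrict_union_le _ _)
  refine ae_mono hle (ae_add_measure_iff.2 ⟨hv.mono fun x hx h => absurd hx h, ?_⟩)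
  exact (ae_restrict_of_ae_restrict_of_subset subset_closure
    (ae_restrict_mem isClosed_closure.measurableSet)).mono fun x hx _ => hx

lemma ofReal_le_restrict_ball_of_mem_closure [PseudoMetricSpace X] [OpensMeasurableSpace X]
    {n : ℕ} {c : ℝ}
    (hU : ∀ x₀ ∈ U, ∀ ρ : ℝ, 0 < ρ → ENNReal.ofReal (c * ρ ^ n) ≤ μ (S ∩ ball x₀ ρ))
    {x : X} (hx : x ∈ closure U) {ρ : ℝ} (hρ : 0 < ρ) :
    ENNReal.ofReal (c / 2 ^ n * ρ ^ n) ≤ μ.restrict S (ball x ρ) := by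
  obtain ⟨y, hyU, hxy⟩ := Metric.mem_closure_iff.1 hx (ρ / 2) (half_pos hρ)
  calc ENNReal.ofReal (c / 2 ^ n * ρ ^ n) = ENNReal.ofReal (c * (ρ / 2) ^ n) := by
        rw [div_pow]; ring_nf
    _ ≤ μ (S ∩ ball y (ρ / 2)) := hU y hyU _ (half_pos hρ)
    _ ≤ μ.restrict S (ball x ρ) := by
        rw [Measure.restrict_apply measurableSet_ball, inter_comm]
        refine measure_mono (inter_subset_inter_left _ (ball_subset_ball' ?_))
        rw [dist_comm]
        linarith

end Support

theorem fractional_sobolev_global_general (n : ℕ) (s p : ℝ)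
    (hs : s ∈ Ioo (0 : ℝ) 1) (hp : 1 ≤ p) (hnsp : s * p < n)
    (cstar : ℝ) (hcstar : 0 < cstar) :
    ∃ C : ℝ, 0 < C ∧
      ∀ (S U : Set (EuclideanSpace ℝ (Fin (n + 1)))),
        (∀ x : EuclideanSpace ℝ (Fin (n + 1)), ∃ ε > 0, μH[(n : ℝ)] (S ∩ ball x ε) ≠ ⊤) →
        (∃ V : Set (EuclideanSpace ℝ (Fin (n + 1))), IsOpen V ∧ U = S ∩ V) →
        (∀ x₀ ∈ U, ∀ ρ : ℝ, 0 < ρ →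
          ENNReal.ofReal (cstar * ρ ^ n) ≤ μH[(n : ℝ)] (S ∩ ball x₀ ρ)) →
        ∀ v : EuclideanSpace ℝ (Fin (n + 1)) → ℝ,
          MemLp v (ENNReal.ofReal p) (μH[(n : ℝ)].restrict S) →
          fracSeminorm n s p S v ≠ ⊤ →
          (∀ᵐ x ∂(μH[(n : ℝ)].restrict (S \ U)), v x = 0) →
          eLpNorm v (ENNReal.ofReal ((n : ℝ) * p / ((n : ℝ) - s * p)))
              (μH[(n : ℝ)].restrict S)
            ≤ ENNReal.ofReal C * fracSeminorm n s p S v := by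
  have hp₀ : 0 < p := one_pos.trans_le hp
  have hn : (0 : ℝ) < n := (mul_pos hs.1 hp₀).trans hnsp
  have hC := fracSobolevConst_ne_top (c := cstar / 2 ^ n) hs.1 hp₀ hnsp
  refine ⟨(fracSobolevConst n s p (cstar / 2 ^ n)).toReal,
    ENNReal.toReal_pos (fracSobolevConst_ne_zero hs.1.le hp₀.le (by positivity)) hC, ?_⟩
  rintro S U - - hU v hv - hv0
  have := Measure.nullSingletonClass_hausdorff (EuclideanSpace ℝ (Fin (n + 1))) hn
  rw [ENNReal.ofReal_toReal hC]
  refine eLpNorm_le_fracSobolevConst_mul hs.1 hp₀ hnsp (by positivity) hv ?_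
  filter_upwards [ae_restrict_mem_closure_of_ae_eq_zero hv0] with x hx hvx ρ hρ
  exact ofReal_le_restrict_ball_of_mem_closure hU (hx hvx) hρ

/-- Universal fractional Sobolev inequality on sets satisfying a global density lower
bound (Proposition 5.2 / Theorem 1.4). -/
theorem fractional_sobolev_global (n : ℕ) (hn : 1 ≤ n) (s p : ℝ)
    (hs : s ∈ Ioo (0 : ℝ) 1) (hp : 1 ≤ p) (hnsp : s * p < n)
    (cstar : ℝ) (hcstar : 0 < cstar) :
    ∃ C : ℝ, 0 < C ∧
      ∀ (S U : Set (EuclideanSpace ℝ (Fin (n + 1)))),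
        (∀ x : EuclideanSpace ℝ (Fin (n + 1)), ∃ ε > 0, μH[(n : ℝ)] (S ∩ ball x ε) ≠ ⊤) →
        (∃ V : Set (EuclideanSpace ℝ (Fin (n + 1))), IsOpen V ∧ U = S ∩ V) →
        (∀ x₀ ∈ U, ∀ ρ : ℝ, 0 < ρ →
          ENNReal.ofReal (cstar * ρ ^ n) ≤ μH[(n : ℝ)] (S ∩ ball x₀ ρ)) →
        ∀ v : EuclideanSpace ℝ (Fin (n + 1)) → ℝ,
          MemLp v (ENNReal.ofReal p) (μH[(n : ℝ)].restrict S) →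
          fracSeminorm n s p S v ≠ ⊤ →
          (∀ᵐ x ∂(μH[(n : ℝ)].restrict (S \ U)), v x = 0) →
          eLpNorm v (ENNReal.ofReal ((n : ℝ) * p / ((n : ℝ) - s * p)))
              (μH[(n : ℝ)].restrict S)
            ≤ ENNReal.ofReal C * fracSeminorm n s p S v :=
  fractional_sobolev_global_general n s p hs hp hnsp cstar hcstar
end
end

section
/- Let q ∈ (0, 1). Then, for every a, b > 0 and every σ, τ ≥ 0, it holds that (a − b)(σ²/a^q − τ²/b^q) ≤ −(q/2)(a^{(1−q)/2} − b^{(1−q)/2})² · min{σ, τ}² + (4/q) · max{a, b}^{1−q} · (σ − τ)². -/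
/-!
Assume `b ≤ a` and put `u = (a - b) / a^q`, `D = (a - b) (b^{-q} - a^{-q})`, so that the left-hand
side is `u σ² - (u + D) τ²`. The tangent line of the concave map `t ↦ t^q` at `a` gives
`q (a - b) b^q ≤ a (a^q - b^q)`, hence `q (a - b)² / a^{1+q} ≤ D`. This yields `q u² ≤ D a^{1-q}`
directly, and `q (a^{(1-q)/2} - b^{(1-q)/2})² ≤ D` after the estimate
`(a^{(1-q)/2} - b^{(1-q)/2}) a^{(1+q)/2} ≤ a - b`. What remains is a quadratic-form estimate in
`σ, τ`: for `τ ≤ σ` the cross term `2 u τ (σ - τ)` is absorbed by AM-GM into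
`D τ² / 2 + (2 / q) a^{1-q} (σ - τ)²`.
-/

open Set

theorem mul_sub_mul_rpow_le_mul_rpow_sub_rpow {q a b : ℝ} (hq₀ : 0 ≤ q) (hq₁ : q ≤ 1)
    (ha : 0 < a) (hb : 0 ≤ b) : q * (a - b) * a ^ q ≤ a * (a ^ q - b ^ q) := by
  have h := rpow_one_add_le_one_add_mul_self (s := b / a - 1)
    (by linarith [div_nonneg hb ha.le]) hq₀ hq₁
  rw [add_sub_cancel, Real.div_rpow hb ha.le, div_le_iff₀ (by positivity)] at h
  have hexpand : a * ((1 + q * (b / a - 1)) * a ^ q) = a * a ^ q - q * (a - b) * a ^ q := by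
    field_simp
    ring
  linarith [mul_le_mul_of_nonneg_left h ha.le]

theorem rpow_sub_rpow_mul_rpow_le_sub {r s a b : ℝ} (hs : 0 ≤ s) (hrs : r + s = 1)
    (hb : 0 < b) (hab : b ≤ a) : (a ^ r - b ^ r) * a ^ s ≤ a - b := by
  have ha : 0 < a := hb.trans_le hab
  have hpow : ∀ x : ℝ, 0 < x → x ^ r * x ^ s = x := fun x hx => by
    rw [← Real.rpow_add hx, hrs, Real.rpow_one]
  have : b ^ r * b ^ s ≤ b ^ r * a ^ s := by gcongr
  nlinarith [hpow a ha, hpow b hb]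

theorem mul_sub_sq_div_le_sub_mul_inv_rpow_sub_inv_rpow {q a b : ℝ} (hq₀ : 0 ≤ q)
    (hq₁ : q ≤ 1) (hb : 0 < b) (hab : b ≤ a) :
    q * (a - b) ^ 2 / (a * a ^ q) ≤ (a - b) * ((b ^ q)⁻¹ - (a ^ q)⁻¹) := by
  have ha : 0 < a := hb.trans_le hab
  have hA := Real.rpow_pos_of_pos ha q
  have hB := Real.rpow_pos_of_pos hb q
  have hBA : b ^ q ≤ a ^ q := by gcongr
  have key : q * (a - b) * b ^ q ≤ a * (a ^ q - b ^ q) :=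
    calc q * (a - b) * b ^ q ≤ q * (a - b) * a ^ q := by gcongr
      _ ≤ a * (a ^ q - b ^ q) := mul_sub_mul_rpow_le_mul_rpow_sub_rpow hq₀ hq₁ ha hb.le
  rw [inv_sub_inv hB.ne' hA.ne', div_le_iff₀ (by positivity)]
  field_simp
  linarith [mul_le_mul_of_nonneg_left key (sub_nonneg.2 hab)]

theorem mul_rpow_sub_rpow_sq_le_sub_mul_inv_rpow_sub_inv_rpow {q a b : ℝ} (hq₀ : 0 ≤ q)
    (hq₁ : q ≤ 1) (hb : 0 < b) (hab : b ≤ a) :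
    q * (a ^ ((1 - q) / 2) - b ^ ((1 - q) / 2)) ^ 2 ≤ (a - b) * ((b ^ q)⁻¹ - (a ^ q)⁻¹) := by
  have ha : 0 < a := hb.trans_le hab
  have hXY : 0 ≤ a ^ ((1 - q) / 2) - b ^ ((1 - q) / 2) := by
    rw [sub_nonneg]; gcongr
  have hlin := rpow_sub_rpow_mul_rpow_le_sub (r := (1 - q) / 2) (s := (1 + q) / 2)
    (by linarith) (by ring) hb hab
  have hsq : (a ^ ((1 + q) / 2)) ^ 2 = a * a ^ q := by
    rw [sq, ← Real.rpow_add ha, show (1 + q) / 2 + (1 + q) / 2 = 1 + q by ring,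
      Real.rpow_add ha, Real.rpow_one]
  refine le_trans ?_ (mul_sub_sq_div_le_sub_mul_inv_rpow_sub_inv_rpow hq₀ hq₁ hb hab)
  rw [← hsq, le_div_iff₀ (by positivity), mul_assoc, ← mul_pow]
  gcongr

theorem mul_sq_sub_add_mul_sq_le {q u D K σ τ : ℝ} (hq : 0 < q) (hq₂ : q ≤ 2) (hu : 0 ≤ u)
    (huK : u ≤ K) (hD : 0 ≤ D) (huD : q * u ^ 2 ≤ D * K) (hσ : 0 ≤ σ) :
    u * σ ^ 2 - (u + D) * τ ^ 2 ≤ -(D / 2) * min σ τ ^ 2 + 4 / q * K * (σ - τ) ^ 2 := by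
  have hK : 0 ≤ K := hu.trans huK
  have hKs : 0 ≤ K * (σ - τ) ^ 2 := by positivity
  rcases le_total σ τ with h | h
  · rw [min_eq_left h]
    have hsq : σ ^ 2 ≤ τ ^ 2 := pow_le_pow_left₀ hσ h 2
    calc u * σ ^ 2 - (u + D) * τ ^ 2 ≤ -D * σ ^ 2 := by
          linarith [mul_le_mul_of_nonneg_left hsq hu, mul_le_mul_of_nonneg_left hsq hD]
      _ ≤ -(D / 2) * σ ^ 2 + 4 / q * K * (σ - τ) ^ 2 := by
          have : 0 ≤ 4 / q * K * (σ - τ) ^ 2 := by positivity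
          linarith [mul_nonneg hD (sq_nonneg σ)]
  · rw [min_eq_right h]
    have amgm : 2 * (u * τ * (σ - τ)) ≤ D / 2 * τ ^ 2 + 2 / q * K * (σ - τ) ^ 2 := by
      refine two_mul_le_add_of_sq_le_mul (by positivity) (by positivity) ?_
      calc (u * τ * (σ - τ)) ^ 2 = u ^ 2 * (τ ^ 2 * (σ - τ) ^ 2) := by ring
        _ ≤ D * K / q * (τ ^ 2 * (σ - τ) ^ 2) := by
            gcongr
            rwa [le_div_iff₀ hq, mul_comm]
        _ = D / 2 * τ ^ 2 * (2 / q * K * (σ - τ) ^ 2) := by ring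
    have hKq : K * (σ - τ) ^ 2 ≤ 2 / q * (K * (σ - τ) ^ 2) :=
      le_mul_of_one_le_left hKs ((one_le_div hq).2 hq₂)
    calc u * σ ^ 2 - (u + D) * τ ^ 2
        = u * (σ - τ) ^ 2 + 2 * (u * τ * (σ - τ)) - D * τ ^ 2 := by ring
      _ ≤ K * (σ - τ) ^ 2 + (D / 2 * τ ^ 2 + 2 / q * K * (σ - τ) ^ 2) - D * τ ^ 2 := by
          gcongr
      _ ≤ -(D / 2) * τ ^ 2 + 4 / q * K * (σ - τ) ^ 2 := by
          have hsplit : 4 / q * K * (σ - τ) ^ 2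
              = 2 / q * (K * (σ - τ) ^ 2) + 2 / q * K * (σ - τ) ^ 2 := by ring
          linarith

theorem numerical_inequality_of_le {q a b : ℝ} (σ τ : ℝ) (hq₀ : 0 < q) (hq₁ : q ≤ 1)
    (hb : 0 < b) (hab : b ≤ a) (hσ : 0 ≤ σ) :
    (a - b) * (σ ^ 2 / a ^ q - τ ^ 2 / b ^ q)
      ≤ -(q / 2) * (a ^ ((1 - q) / 2) - b ^ ((1 - q) / 2)) ^ 2 * min σ τ ^ 2 +
        4 / q * a ^ (1 - q) * (σ - τ) ^ 2 := by
  have ha : 0 < a := hb.trans_le hab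
  have hA := Real.rpow_pos_of_pos ha q
  have hK : a ^ (1 - q) = a / a ^ q := by rw [Real.rpow_sub ha, Real.rpow_one]
  have hZ := mul_rpow_sub_rpow_sq_le_sub_mul_inv_rpow_sub_inv_rpow hq₀.le hq₁ hb hab
  have hu : 0 ≤ (a - b) / a ^ q := div_nonneg (sub_nonneg.2 hab) hA.le
  have huK : (a - b) / a ^ q ≤ a ^ (1 - q) := by
    rw [hK]; exact div_le_div_of_nonneg_right (by linarith) hA.le
  have huD : q * ((a - b) / a ^ q) ^ 2 ≤ (a - b) * ((b ^ q)⁻¹ - (a ^ q)⁻¹) * a ^ (1 - q) := by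
    rw [hK]
    calc q * ((a - b) / a ^ q) ^ 2 = q * (a - b) ^ 2 / (a * a ^ q) * (a / a ^ q) := by field_simp
      _ ≤ _ := mul_le_mul_of_nonneg_right
          (mul_sub_sq_div_le_sub_mul_inv_rpow_sub_inv_rpow hq₀.le hq₁ hb hab) (by positivity)
  calc (a - b) * (σ ^ 2 / a ^ q - τ ^ 2 / b ^ q)
      = (a - b) / a ^ q * σ ^ 2
          - ((a - b) / a ^ q + (a - b) * ((b ^ q)⁻¹ - (a ^ q)⁻¹)) * τ ^ 2 := by ring
    _ ≤ -((a - b) * ((b ^ q)⁻¹ - (a ^ q)⁻¹) / 2) * min σ τ ^ 2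
          + 4 / q * a ^ (1 - q) * (σ - τ) ^ 2 :=
      mul_sq_sub_add_mul_sq_le hq₀ (by linarith) hu huK (le_trans (by positivity) hZ) huD hσ
    _ ≤ _ := by gcongr ?_ * _ + _; linarith

/-- Numerical inequality used in the Moser iteration (Lemma A.3). -/
theorem numerical_inequality (q : ℝ) (hq : q ∈ Ioo (0 : ℝ) 1) (a b σ τ : ℝ)
    (ha : 0 < a) (hb : 0 < b) (hσ : 0 ≤ σ) (hτ : 0 ≤ τ) :
    (a - b) * (σ ^ 2 / a ^ q - τ ^ 2 / b ^ q)
      ≤ -(q / 2) * (a ^ ((1 - q) / 2) - b ^ ((1 - q) / 2)) ^ 2 * min σ τ ^ 2 +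
        4 / q * max a b ^ (1 - q) * (σ - τ) ^ 2 := by
  rcases le_total b a with hab | hab
  · rw [max_eq_left hab]
    exact numerical_inequality_of_le σ τ hq.1 hq.2.le hb hab hσ
  · rw [max_eq_right hab, min_comm]
    convert numerical_inequality_of_le τ σ hq.1 hq.2.le ha hab hτ using 1 <;> ring
end
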